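/- The program c_ex4 = rec f = λz. with {return x = op (), op x k = ()} handle f () is typable in the simple type system ⊢_ST (with Σ(op) = unit → unit, giving c_ex4 type unit → unit), but it is not typable in the ATM type system ⊢_ATM. -/

import Mathlib

namespace LEH

/-! ## Syntax of λEH (finitary PCF with effect handlers), extended with records,
    in de Bruijn representation.  A handler is represented by its return clause
    (one binder) and, for each operation name `o : ℕ`, an operation clause
    (two binders: the parameter `x` at index 1 and the continuation `k` at index 0). -/

mutual
inductive Val : Type
| var (n : ℕ)
| unit
| tt
| ff
| lam (c : Comp)
| fix (v : Val)              -- rec x = v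
| record (f : ℕ → Val)
inductive Comp : Type
| ret (v : Val)
| op (o : ℕ) (v : Val)
| app (v₁ v₂ : Val)
| ite (v : Val) (c₁ c₂ : Comp)
| letin (c₁ c₂ : Comp)
| handle (hret : Comp) (hops : ℕ → Comp) (c : Comp)
| proj (v : Val) (l : ℕ)
end

def liftR (ξ : ℕ → ℕ) : ℕ → ℕ
| 0 => 0
| n+1 => ξ n + 1

mutual
def renameV (ξ : ℕ → ℕ) : Val → Val
| .var n => .var (ξ n)
| .unit => .unit
| .tt => .tt
| .ff => .ff
| .lam c => .lam (renameC (liftR ξ) c)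
| .fix v => .fix (renameV (liftR ξ) v)
| .record f => .record (fun o => renameV ξ (f o))
def renameC (ξ : ℕ → ℕ) : Comp → Comp
| .ret v => .ret (renameV ξ v)
| .op o v => .op o (renameV ξ v)
| .app v₁ v₂ => .app (renameV ξ v₁) (renameV ξ v₂)
| .ite v c₁ c₂ => .ite (renameV ξ v) (renameC ξ c₁) (renameC ξ c₂)
| .letin c₁ c₂ => .letin (renameC ξ c₁) (renameC (liftR ξ) c₂)
| .handle r ops c =>
    .handle (renameC (liftR ξ) r) (fun o => renameC (liftR (liftR ξ)) (ops o)) (renameC ξ c)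
| .proj v l => .proj (renameV ξ v) l
end

def liftS (σ : ℕ → Val) : ℕ → Val
| 0 => .var 0
| n+1 => renameV Nat.succ (σ n)

mutual
def substV (σ : ℕ → Val) : Val → Val
| .var n => σ n
| .unit => .unit
| .tt => .tt
| .ff => .ff
| .lam c => .lam (substC (liftS σ) c)
| .fix v => .fix (substV (liftS σ) v)
| .record f => .record (fun o => substV σ (f o))
def substC (σ : ℕ → Val) : Comp → Comp
| .ret v => .ret (substV σ v)
| .op o v => .op o (substV σ v)
| .app v₁ v₂ => .app (substV σ v₁) (substV σ v₂)
| .ite v c₁ c₂ => .ite (substV σ v) (substC σ c₁) (substC σ c₂)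
| .letin c₁ c₂ => .letin (substC σ c₁) (substC (liftS σ) c₂)
| .handle r ops c =>
    .handle (substC (liftS σ) r) (fun o => substC (liftS (liftS σ)) (ops o)) (substC σ c)
| .proj v l => .proj (substV σ v) l
end

/-- substitution of a single value for de Bruijn index 0 -/
def sub1 (v : Val) : ℕ → Val
| 0 => v
| n+1 => .var n

/-- substitution of two values: index 1 ↦ `x` (operation parameter),
    index 0 ↦ `k` (captured continuation) -/
def sub2 (x k : Val) : ℕ → Val
| 0 => k
| 1 => x
| n+2 => .var n

def subst1C (c : Comp) (v : Val) : Comp := substC (sub1 v) c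
def subst1V (w : Val) (v : Val) : Val := substV (sub1 v) w

/-! ## Evaluation contexts and small-step operational semantics -/

inductive EC : Type
| hole
| letE (E : EC) (c : Comp)

def plug : EC → Comp → Comp
| .hole, c => c
| .letE E c₂, c => .letin (plug E c) c₂

def renameE (ξ : ℕ → ℕ) : EC → EC
| .hole => .hole
| .letE E c => .letE (renameE ξ E) (renameC (liftR ξ) c)

/-- the captured delimited continuation `λ y. with h handle E[return y]` -/
def contOf (r : Comp) (ops : ℕ → Comp) (E : EC) : Val :=
  .lam (.handle (renameC (liftR Nat.succ) r)
    (fun o => renameC (liftR (liftR Nat.succ)) (ops o))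
    (plug (renameE Nat.succ E) (.ret (.var 0))))

inductive Step : Comp → Comp → Prop
| letc {c₁ c₂ c} : Step c₁ c₂ → Step (.letin c₁ c) (.letin c₂ c)
| letret {v c} : Step (.letin (.ret v) c) (subst1C c v)
| lamapp {c v} : Step (.app (.lam c) v) (subst1C c v)
| fixapp {v v'} : Step (.app (.fix v) v') (.app (subst1V v (.fix v)) v')
| iftrue {c₁ c₂} : Step (.ite .tt c₁ c₂) c₁
| iffalse {c₁ c₂} : Step (.ite .ff c₁ c₂) c₂
| han {r ops c c'} : Step c c' → Step (.handle r ops c) (.handle r ops c')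
| hret {r ops v} : Step (.handle r ops (.ret v)) (subst1C r v)
| hop {r ops E o v} :
    Step (.handle r ops (plug E (.op o v)))
      (substC (sub2 v (contOf r ops E)) (ops o))
| projr {f l} : Step (.proj (.record f) l) (.ret (f l))

abbrev StepStar : Comp → Comp → Prop := Relation.ReflTransGen Step
abbrev StepPlus : Comp → Comp → Prop := Relation.TransGen Step

/-! ## ATM types and subtyping -/

mutual
inductive VTy : Type
| unit
| bool
| arrow (τ : VTy) (ρ : CTy)
inductive CTy : Type
| pure (τ : VTy)
| eff (τ : VTy) (ρ₁ ρ₂ : CTy)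
end

mutual
inductive SubV : VTy → VTy → Prop
| unit : SubV .unit .unit
| bool : SubV .bool .bool
| arrow {τ₁ τ₂ ρ₁ ρ₂} : SubV τ₂ τ₁ → SubC ρ₁ ρ₂ → SubV (.arrow τ₁ ρ₁) (.arrow τ₂ ρ₂)
inductive SubC : CTy → CTy → Prop
| pure {τ₁ τ₂} : SubV τ₁ τ₂ → SubC (.pure τ₁) (.pure τ₂)
| ipure {τ₁ τ₂ ρ₁ ρ₂ ρ₁' ρ₂'} :
    SubV τ₁ τ₂ → SubC ρ₂ ρ₁ → SubC ρ₁' ρ₂' → SubC (.eff τ₁ ρ₁ ρ₁') (.eff τ₂ ρ₂ ρ₂')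
| embed {τ₁ τ₂ ρ₁ ρ₂} : SubV τ₁ τ₂ → SubC ρ₁ ρ₂ → SubC (.pure τ₁) (.eff τ₂ ρ₁ ρ₂)
end

/-- An operation signature Σ: each operation `o` has type
    `arg o → res o / ans1 o ⇒ ans2 o`. -/
structure Sig where
  arg : ℕ → VTy
  res : ℕ → VTy
  ans1 : ℕ → CTy
  ans2 : ℕ → CTy

/-! ## The ATM type system ⊢_ATM -/

mutual
inductive TV : Sig → List VTy → Val → VTy → Prop
| unit {S Γ} : TV S Γ .unit .unit
| tt {S Γ} : TV S Γ .tt .bool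
| ff {S Γ} : TV S Γ .ff .bool
| var {S Γ n τ} : Γ[n]? = some τ → TV S Γ (.var n) τ
| lam {S Γ τ c ρ} : TC S (τ :: Γ) c ρ → TV S Γ (.lam c) (.arrow τ ρ)
| fix {S Γ τ v} : TV S (τ :: Γ) v τ → TV S Γ (.fix v) τ
| vsub {S Γ v τ τ'} : TV S Γ v τ → SubV τ τ' → TV S Γ v τ'
inductive TC : Sig → List VTy → Comp → CTy → Prop
| ret {S Γ v τ} : TV S Γ v τ → TC S Γ (.ret v) (.pure τ)
| app {S Γ v₁ v₂ τ ρ} : TV S Γ v₁ (.arrow τ ρ) → TV S Γ v₂ τ → TC S Γ (.app v₁ v₂) ρ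
| ite {S Γ v c₁ c₂ ρ} :
    TV S Γ v .bool → TC S Γ c₁ ρ → TC S Γ c₂ ρ → TC S Γ (.ite v c₁ c₂) ρ
| letP {S Γ c₁ c₂ τ₁ τ₂} :
    TC S Γ c₁ (.pure τ₁) → TC S (τ₁ :: Γ) c₂ (.pure τ₂) →
    TC S Γ (.letin c₁ c₂) (.pure τ₂)
| letIp {S Γ c₁ c₂ τ₁ τ₂ ρ₁ ρ₁' ρ₂} :
    TC S Γ c₁ (.eff τ₁ ρ₁ ρ₁') → TC S (τ₁ :: Γ) c₂ (.eff τ₂ ρ₂ ρ₁) →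
    TC S Γ (.letin c₁ c₂) (.eff τ₂ ρ₂ ρ₁')
| op {S Γ o v} : TV S Γ v (S.arg o) → TC S Γ (.op o v) (.eff (S.res o) (S.ans1 o) (S.ans2 o))
| handle {S Γ r ops c τ ρ ρ'} :
    (∀ o, TC S (.arrow (S.res o) (S.ans1 o) :: S.arg o :: Γ) (ops o) (S.ans2 o)) →
    TC S (τ :: Γ) r ρ →
    TC S Γ c (.eff τ ρ ρ') →
    TC S Γ (.handle r ops c) ρ'
| csub {S Γ c ρ ρ'} : TC S Γ c ρ → SubC ρ ρ' → TC S Γ c ρ'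
end

/-! ## Simple types and the simple type system ⊢_ST (on λEH with records).
    `STy.sig` is the record type `⟦Σ⟧`; the system is parametrized by an
    interpretation `I : ℕ → STy` of its fields and by an operation
    signature `SS`. -/

inductive STy : Type
| unit
| bool
| arrow (σ₁ σ₂ : STy)
| sig

structure SigS where
  arg : ℕ → STy
  res : ℕ → STy

mutual
inductive SV : (ℕ → STy) → SigS → List STy → Val → STy → Prop
| unit {I SS Γ} : SV I SS Γ .unit .unit
| tt {I SS Γ} : SV I SS Γ .tt .bool
| ff {I SS Γ} : SV I SS Γ .ff .bool
| var {I SS Γ n σ} : Γ[n]? = some σ → SV I SS Γ (.var n) σ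
| lam {I SS Γ σ c σ'} : SC I SS (σ :: Γ) c σ' → SV I SS Γ (.lam c) (.arrow σ σ')
| fix {I SS Γ σ v} : SV I SS (σ :: Γ) v σ → SV I SS Γ (.fix v) σ
| record {I SS Γ f} : (∀ o, SV I SS Γ (f o) (I o)) → SV I SS Γ (.record f) .sig
inductive SC : (ℕ → STy) → SigS → List STy → Comp → STy → Prop
| ret {I SS Γ v σ} : SV I SS Γ v σ → SC I SS Γ (.ret v) σ
| app {I SS Γ v₁ v₂ σ σ'} :
    SV I SS Γ v₁ (.arrow σ σ') → SV I SS Γ v₂ σ → SC I SS Γ (.app v₁ v₂) σ'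
| ite {I SS Γ v c₁ c₂ σ} :
    SV I SS Γ v .bool → SC I SS Γ c₁ σ → SC I SS Γ c₂ σ → SC I SS Γ (.ite v c₁ c₂) σ
| letin {I SS Γ c₁ c₂ σ σ'} :
    SC I SS Γ c₁ σ → SC I SS (σ :: Γ) c₂ σ' → SC I SS Γ (.letin c₁ c₂) σ'
| op {I SS Γ o v} : SV I SS Γ v (SS.arg o) → SC I SS Γ (.op o v) (SS.res o)
| handle {I SS Γ r ops c σ σ'} :
    SC I SS (σ :: Γ) r σ' →
    (∀ o, SC I SS (.arrow (SS.res o) σ' :: SS.arg o :: Γ) (ops o) σ') →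
    SC I SS Γ c σ →
    SC I SS Γ (.handle r ops c) σ'
| proj {I SS Γ v l} : SV I SS Γ v .sig → SC I SS Γ (.proj v l) (I l)
end

/-! ## Derivation trees (Type-valued) for subtyping and ATM typing,
    used by the typing-derivation-directed CPS transformation -/

mutual
inductive SubVD : VTy → VTy → Type
| unit : SubVD .unit .unit
| bool : SubVD .bool .bool
| arrow {τ₁ τ₂ ρ₁ ρ₂} : SubVD τ₂ τ₁ → SubCD ρ₁ ρ₂ → SubVD (.arrow τ₁ ρ₁) (.arrow τ₂ ρ₂)
inductive SubCD : CTy → CTy → Type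
| pure {τ₁ τ₂} : SubVD τ₁ τ₂ → SubCD (.pure τ₁) (.pure τ₂)
| ipure {τ₁ τ₂ ρ₁ ρ₂ ρ₁' ρ₂'} :
    SubVD τ₁ τ₂ → SubCD ρ₂ ρ₁ → SubCD ρ₁' ρ₂' → SubCD (.eff τ₁ ρ₁ ρ₁') (.eff τ₂ ρ₂ ρ₂')
| embed {τ₁ τ₂ ρ₁ ρ₂} : SubVD τ₁ τ₂ → SubCD ρ₁ ρ₂ → SubCD (.pure τ₁) (.eff τ₂ ρ₁ ρ₂)
end

mutual
inductive TVD : Sig → List VTy → Val → VTy → Type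
| unit {S Γ} : TVD S Γ .unit .unit
| tt {S Γ} : TVD S Γ .tt .bool
| ff {S Γ} : TVD S Γ .ff .bool
| var {S Γ τ} (n : ℕ) : Γ[n]? = some τ → TVD S Γ (.var n) τ
| lam {S Γ τ c ρ} : TCD S (τ :: Γ) c ρ → TVD S Γ (.lam c) (.arrow τ ρ)
| fix {S Γ τ v} : TVD S (τ :: Γ) v τ → TVD S Γ (.fix v) τ
| vsub {S Γ v τ τ'} : TVD S Γ v τ → SubVD τ τ' → TVD S Γ v τ'
inductive TCD : Sig → List VTy → Comp → CTy → Type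
| ret {S Γ v τ} : TVD S Γ v τ → TCD S Γ (.ret v) (.pure τ)
| app {S Γ v₁ v₂ τ ρ} : TVD S Γ v₁ (.arrow τ ρ) → TVD S Γ v₂ τ → TCD S Γ (.app v₁ v₂) ρ
| ite {S Γ v c₁ c₂ ρ} :
    TVD S Γ v .bool → TCD S Γ c₁ ρ → TCD S Γ c₂ ρ → TCD S Γ (.ite v c₁ c₂) ρ
| letP {S Γ c₁ c₂ τ₁ τ₂} :
    TCD S Γ c₁ (.pure τ₁) → TCD S (τ₁ :: Γ) c₂ (.pure τ₂) →
    TCD S Γ (.letin c₁ c₂) (.pure τ₂)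
| letIp {S Γ c₁ c₂ τ₁ τ₂ ρ₁ ρ₁' ρ₂} :
    TCD S Γ c₁ (.eff τ₁ ρ₁ ρ₁') → TCD S (τ₁ :: Γ) c₂ (.eff τ₂ ρ₂ ρ₁) →
    TCD S Γ (.letin c₁ c₂) (.eff τ₂ ρ₂ ρ₁')
| op {S Γ} (o : ℕ) {v} :
    TVD S Γ v (S.arg o) → TCD S Γ (.op o v) (.eff (S.res o) (S.ans1 o) (S.ans2 o))
| handle {S Γ r ops c τ ρ ρ'} :
    (∀ o, TCD S (.arrow (S.res o) (S.ans1 o) :: S.arg o :: Γ) (ops o) (S.ans2 o)) →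
    TCD S (τ :: Γ) r ρ →
    TCD S Γ c (.eff τ ρ ρ') →
    TCD S Γ (.handle r ops c) ρ'
| csub {S Γ c ρ ρ'} : TCD S Γ c ρ → SubCD ρ ρ' → TCD S Γ c ρ'
end

/-! ## The CPS transformation -/

/-! CPS transformation of ATM value and computation types into simple types;
    `⟦τ/ρ₁⇒ρ₂⟧ = ⟦Σ⟧ → (⟦τ⟧ → ⟦ρ₁⟧) → ⟦ρ₂⟧`, where `⟦Σ⟧` is `STy.sig`. -/
mutual
def cpsT : VTy → STy
| .unit => .unit
| .bool => .bool
| .arrow τ ρ => .arrow (cpsT τ) (cpsCT ρ)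
def cpsCT : CTy → STy
| .pure τ => cpsT τ
| .eff τ ρ₁ ρ₂ => .arrow .sig (.arrow (.arrow (cpsT τ) (cpsCT ρ₁)) (cpsCT ρ₂))
end

/-- the field types of the record type `⟦Σ⟧` -/
def opSTy (S : Sig) : ℕ → STy := fun o =>
  .arrow (cpsT (S.arg o)) (.arrow (.arrow (cpsT (S.res o)) (cpsCT (S.ans1 o))) (cpsCT (S.ans2 o)))

/-- application of a computation to a computation (left-to-right sequencing sugar) -/
def apc (c₁ c₂ : Comp) : Comp :=
  .letin c₁ (.letin (renameC Nat.succ c₂) (.app (.var 1) (.var 0)))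

/-! CPS transformation of subtyping derivations, given as the coercion
    they induce on (already-transformed) terms; the static applications `@`
    of the paper are performed on the fly. -/
mutual
def coerceV : {τ τ' : VTy} → SubVD τ τ' → Val → Val
| _, _, .unit, v => v
| _, _, .bool, v => v
| _, _, .arrow d21 d12, f =>
    .lam (coerceC d12 (.app (renameV Nat.succ f) (coerceV d21 (.var 0))))
def coerceC : {ρ ρ' : CTy} → SubCD ρ ρ' → Comp → Comp
| _, _, .pure d, c => .letin c (.ret (coerceV d (.var 0)))
| _, _, .ipure dT d21 d12, c =>
    .ret (.lam (.ret (.lam (coerceC d12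
      (apc (apc (renameC (fun n => n + 2) c) (.ret (.var 1)))
        (.ret (.lam (coerceC d21 (apc (.ret (.var 1)) (.ret (coerceV dT (.var 0))))))))))))
| _, _, .embed dT dR, c =>
    .ret (.lam (.ret (.lam (coerceC dR
      (.letin (renameC (fun n => n + 2) c)
        (apc (.ret (.var 1)) (.ret (coerceV dT (.var 0)))))))))
end

/-! the typing-derivation-directed CPS transformation -/
mutual
def cpsV {S : Sig} : {Γ : List VTy} → {v : Val} → {τ : VTy} → TVD S Γ v τ → Val
| _, _, _, .unit => .unit
| _, _, _, .tt => .tt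
| _, _, _, .ff => .ff
| _, _, _, .var n _ => .var n
| _, _, _, .lam D => .lam (cpsC D)
| _, _, _, .fix D => .fix (cpsV D)
| _, _, _, .vsub D d => coerceV d (cpsV D)
def cpsC {S : Sig} : {Γ : List VTy} → {c : Comp} → {ρ : CTy} → TCD S Γ c ρ → Comp
| _, _, _, .ret D => .ret (cpsV D)
| _, _, _, .app D₁ D₂ => .app (cpsV D₁) (cpsV D₂)
| _, _, _, .ite Dv D₁ D₂ => .ite (cpsV Dv) (cpsC D₁) (cpsC D₂)
| _, _, _, .letP D₁ D₂ => .letin (cpsC D₁) (cpsC D₂)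
| _, _, _, .letIp D₁ D₂ =>
    .ret (.lam (.ret (.lam (apc (apc (renameC (fun n => n + 2) (cpsC D₁)) (.ret (.var 1)))
      (.ret (.lam (apc (apc (renameC (liftR (fun n => n + 2)) (cpsC D₂)) (.ret (.var 2)))
        (.ret (.var 1)))))))))
| _, _, _, .op o Dv =>
    .ret (.lam (.ret (.lam (apc (apc (.proj (.var 1) o)
      (.ret (renameV (fun n => n + 2) (cpsV Dv)))) (.ret (.var 0))))))
| _, _, _, .handle Dops Dret Dc =>
    apc (apc (cpsC Dc) (.ret (.record (fun o => .lam (.ret (.lam (cpsC (Dops o))))))))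
      (.ret (.lam (cpsC Dret)))
| _, _, _, .csub D d => coerceC d (cpsC D)
end

/-- `⟦D⟧ v_h v_k`: applying a CPS-transformed effectful computation to a
    (translated) handler record and continuation -/
def capp2 (c : Comp) (vh vk : Val) : Comp := apc (apc c (.ret vh)) (.ret vk)

/-! ## Effect-handler-freeness and rec-freeness -/

mutual
def hfV : Val → Prop
| .var _ => True
| .unit => True
| .tt => True
| .ff => True
| .lam c => hfC c
| .fix v => hfV v
| .record f => ∀ o, hfV (f o)
def hfC : Comp → Prop
| .ret v => hfV v
| .op _ _ => False
| .app v₁ v₂ => hfV v₁ ∧ hfV v₂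
| .ite v c₁ c₂ => hfV v ∧ hfC c₁ ∧ hfC c₂
| .letin c₁ c₂ => hfC c₁ ∧ hfC c₂
| .handle _ _ _ => False
| .proj v _ => hfV v
end

mutual
def recFreeV : Val → Prop
| .var _ => True
| .unit => True
| .tt => True
| .ff => True
| .lam c => recFreeC c
| .fix _ => False
| .record f => ∀ o, recFreeV (f o)
def recFreeC : Comp → Prop
| .ret v => recFreeV v
| .op _ v => recFreeV v
| .app v₁ v₂ => recFreeV v₁ ∧ recFreeV v₂
| .ite v c₁ c₂ => recFreeV v ∧ recFreeC c₁ ∧ recFreeC c₂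
| .letin c₁ c₂ => recFreeC c₁ ∧ recFreeC c₂
| .handle r ops c => recFreeC r ∧ (∀ o, recFreeC (ops o)) ∧ recFreeC c
| .proj v _ => recFreeV v
end

end LEH

namespace LEH

/-- `c_ex4 = rec f = λz. with {return x = op (), op x k = ()} handle f ()` -/
def cex4 : Val :=
  .fix (.lam (.handle (.op 0 .unit) (fun _ => .ret .unit) (.app (.var 1) .unit)))

/-- the simple-type signature `Σ(op) = unit → unit` -/
def SS17 : SigS := ⟨fun _ => .unit, fun _ => .unit⟩

/-!
In an ATM derivation of `c_ex4`, (T-Rec) types the body of `f`, the handle expression, at some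
`ρf` with `τa → ρf ≤ τ₀`, where `τ₀` is the type of `f`. The handled computation `f ()` gets a
type `τ'/ρ ⇒ ρ'` with `ρ' ≤ ρf` and `ρ` the type of the return clause `op ()`, hence effectful.
Typing `f ()` through `τ₀` gives `ρf ≤ τ'/ρ ⇒ ρ'`, so `ρ' ≤ τ'/ρ ⇒ ρ'`; but subtyping admits
this only for pure `ρ`.
-/

def CTy.IsPure : CTy → Prop
  | .pure _ => True
  | .eff _ _ _ => False

mutual
theorem SubV.refl : ∀ τ : VTy, SubV τ τ
  | .unit => .unit
  | .bool => .bool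
  | .arrow τ ρ => .arrow (SubV.refl τ) (SubC.refl ρ)
theorem SubC.refl : ∀ ρ : CTy, SubC ρ ρ
  | .pure τ => .pure (SubV.refl τ)
  | .eff τ ρ₁ ρ₂ => .ipure (SubV.refl τ) (SubC.refl ρ₁) (SubC.refl ρ₂)
end

mutual
theorem SubV.trans : ∀ {τ₁ τ₂ τ₃ : VTy}, SubV τ₁ τ₂ → SubV τ₂ τ₃ → SubV τ₁ τ₃
  | _, .unit, _, .unit, .unit => .unit
  | _, .bool, _, .bool, .bool => .bool
  | _, .arrow _ _, _, .arrow hτ₁ hρ₁, .arrow hτ₂ hρ₂ =>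
      .arrow (SubV.trans hτ₂ hτ₁) (SubC.trans hρ₁ hρ₂)
  termination_by _ τ₂ _ _ _ => sizeOf τ₂
theorem SubC.trans : ∀ {ρ₁ ρ₂ ρ₃ : CTy}, SubC ρ₁ ρ₂ → SubC ρ₂ ρ₃ → SubC ρ₁ ρ₃
  | _, .pure _, _, .pure hτ₁, .pure hτ₂ => .pure (SubV.trans hτ₁ hτ₂)
  | _, .pure _, _, .pure hτ₁, .embed hτ₂ hρ => .embed (SubV.trans hτ₁ hτ₂) hρ
  | _, .eff _ _ _, _, .ipure hτ₁ hin₁ hout₁, .ipure hτ₂ hin₂ hout₂ =>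
      .ipure (SubV.trans hτ₁ hτ₂) (SubC.trans hin₂ hin₁) (SubC.trans hout₁ hout₂)
  | _, .eff _ _ _, _, .embed hτ₁ hin₁, .ipure hτ₂ hin₂ hout₂ =>
      .embed (SubV.trans hτ₁ hτ₂) (SubC.trans hin₂ (SubC.trans hin₁ hout₂))
  termination_by _ ρ₂ _ _ _ => sizeOf ρ₂
end

theorem SubC.isPure_of_isPure_right {ρ ρ' : CTy} (h : SubC ρ ρ') (hρ' : ρ'.IsPure) :
    ρ.IsPure := by
  cases h <;> trivial

theorem SubC.isPure_of_le_eff_self :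
    ∀ {ρ ρ' : CTy} {τ : VTy}, SubC ρ (.eff τ ρ' ρ) → ρ'.IsPure
  | .pure _, _, _, .embed _ hρ => hρ.isPure_of_isPure_right trivial
  | .eff _ _ _, _, _, .ipure _ hin hout => hin.isPure_of_isPure_right hout.isPure_of_le_eff_self

theorem TV.fix_inv {S : Sig} {Γ : List VTy} {v : Val} {τ : VTy} (h : TV S Γ (.fix v) τ) :
    ∃ τ₀, TV S (τ₀ :: Γ) v τ₀ := by
  generalize hw : Val.fix v = w at h
  induction h using TV.rec (motive_2 := fun _ _ _ _ => True) with
  | fix h => cases hw; exact ⟨_, h⟩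
  | vsub _ _ ih => exact ih hw
  | _ => trivial

theorem TV.lam_inv {S : Sig} {Γ : List VTy} {c : Comp} {τ : VTy} (h : TV S Γ (.lam c) τ) :
    ∃ τa ρ, TC S (τa :: Γ) c ρ ∧ SubV (.arrow τa ρ) τ := by
  generalize hw : Val.lam c = w at h
  induction h using TV.rec (motive_2 := fun _ _ _ _ => True) with
  | lam h => cases hw; exact ⟨_, _, h, SubV.refl _⟩
  | vsub _ hsub ih =>
      obtain ⟨τa, ρ, hc, hle⟩ := ih hw
      exact ⟨τa, ρ, hc, hle.trans hsub⟩
  | _ => trivial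

theorem TV.var_inv {S : Sig} {Γ : List VTy} {n : ℕ} {τ : VTy} (h : TV S Γ (.var n) τ) :
    ∃ τ', Γ[n]? = some τ' ∧ SubV τ' τ := by
  generalize hw : Val.var n = w at h
  induction h using TV.rec (motive_2 := fun _ _ _ _ => True) with
  | var hΓ => cases hw; exact ⟨_, hΓ, SubV.refl _⟩
  | vsub _ hsub ih =>
      obtain ⟨τ', hΓ, hle⟩ := ih hw
      exact ⟨τ', hΓ, hle.trans hsub⟩
  | _ => trivial

theorem TC.app_inv {S : Sig} {Γ : List VTy} {v₁ v₂ : Val} {ρ : CTy}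
    (h : TC S Γ (.app v₁ v₂) ρ) : ∃ τ ρ', TV S Γ v₁ (.arrow τ ρ') ∧ SubC ρ' ρ := by
  generalize hw : Comp.app v₁ v₂ = w at h
  induction h using TC.rec (motive_1 := fun _ _ _ _ => True) with
  | app h₁ _ => cases hw; exact ⟨_, _, h₁, SubC.refl _⟩
  | csub _ hsub ih =>
      obtain ⟨τ, ρ', h₁, hle⟩ := ih hw
      exact ⟨τ, ρ', h₁, hle.trans hsub⟩
  | _ => trivial

theorem TC.handle_inv {S : Sig} {Γ : List VTy} {r c : Comp} {ops : ℕ → Comp} {ρ'' : CTy}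
    (h : TC S Γ (.handle r ops c) ρ'') :
    ∃ τ ρ ρ', TC S (τ :: Γ) r ρ ∧ TC S Γ c (.eff τ ρ ρ') ∧ SubC ρ' ρ'' := by
  generalize hw : Comp.handle r ops c = w at h
  induction h using TC.rec (motive_1 := fun _ _ _ _ => True) with
  | handle _ hr hc => cases hw; exact ⟨_, _, _, hr, hc, SubC.refl _⟩
  | csub _ hsub ih =>
      obtain ⟨τ, ρ, ρ', hr, hc, hle⟩ := ih hw
      exact ⟨τ, ρ, ρ', hr, hc, hle.trans hsub⟩
  | _ => trivial

theorem TC.op_not_isPure {S : Sig} {Γ : List VTy} {o : ℕ} {v : Val} {ρ : CTy}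
    (h : TC S Γ (.op o v) ρ) : ¬ ρ.IsPure := by
  generalize hw : Comp.op o v = w at h
  induction h using TC.rec (motive_1 := fun _ _ _ _ => True) with
  | op _ => exact id
  | csub _ hsub ih => exact fun hpure => ih hw (hsub.isPure_of_isPure_right hpure)
  | _ => trivial

/-- `c_ex4` is `⊢_ST`-typable at type `unit → unit`, but it is not typable in the
    ATM type system (for any ATM signature and any type). -/
theorem cex4_st_typable_atm_untypable :
    SV (fun _ => STy.unit) SS17 [] cex4 (STy.arrow .unit .unit) ∧
    ∀ (S : Sig) (τ : VTy), ¬ TV S [] cex4 τ := by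
  refine ⟨.fix (.lam (.handle (.op .unit) (fun _ => .ret .unit) (.app (.var rfl) .unit))), ?_⟩
  intro S τ h
  obtain ⟨τ₀, hf⟩ := h.fix_inv
  obtain ⟨τa, ρf, hbody, hτ₀⟩ := hf.lam_inv
  obtain ⟨τ', ρ, ρ', hret, happ, hρ'⟩ := hbody.handle_inv
  obtain ⟨τarg, ρres, hvar, hres⟩ := happ.app_inv
  obtain ⟨_, hΓ, hτ₀'⟩ := hvar.var_inv
  cases hΓ
  have hρf : SubC ρf ρres := by
    cases hτ₀.trans hτ₀' with | arrow _ h => exact h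
  exact hret.op_not_isPure (SubC.isPure_of_le_eff_self (hρ'.trans (hρf.trans hres)))

end LEH
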